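/- Let G be a finite group, H a subgroup of G, (π, V) a unitary representation on a finite-dimensional complex Hilbert space, v₀ ∈ V, and define ℓ(v) = ∑_{h ∈ H} ⟨π(h)v, v₀⟩ and φ(g) = ⟨π(g)v₀, v₀⟩. Then for every function f : G → ℂ, ∑_{v ∈ B} ℓ(π(f)v)·conj(ℓ(v)) = ∑_{h₁ ∈ H} ∑_{h₂ ∈ H} ∑_{g ∈ G} f(g)·φ(h₂ g h₁), where B is any orthonormal basis of V and π(f)v = ∑_{g ∈ G} f(g)π(g)v. -/

import Mathlib

/-!
Both sides are matrix coefficients of the single vector `w = ∑_{h ∈ H} π(h)⁻¹ v₀`. Since `π` is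
unitary, `ℓ = ⟨w, ·⟩`, so expanding `w` in the orthonormal basis `B` turns the left-hand side into
`⟨w, π(f) w⟩`. Expanding both copies of `w` gives `∑ f(g) ⟨v₀, π(h₂ g h₁⁻¹) v₀⟩`, and the
substitution `h₁ ↦ h₁⁻¹` yields the right-hand side.
-/

open scoped InnerProductSpace

section

variable {𝕜 : Type*} [RCLike 𝕜]

theorem OrthonormalBasis.sum_inner_map_mul_conj_inner
    {ι E F : Type*} [Fintype ι] [NormedAddCommGroup E] [InnerProductSpace 𝕜 E]
    [NormedAddCommGroup F] [InnerProductSpace 𝕜 F]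
    (b : OrthonormalBasis ι 𝕜 E) (T : E →ₗ[𝕜] F) (u : F) (w : E) :
    ∑ i, ⟪u, T (b i)⟫_𝕜 * starRingEnd 𝕜 ⟪w, b i⟫_𝕜 = ⟪u, T w⟫_𝕜 := by
  conv_rhs => rw [← b.sum_repr' w]
  simp only [map_sum, map_smul, inner_sum, inner_smul_right, inner_conj_symm, mul_comm]

section UnitaryRepresentation

variable {G : Type*} [Group G] {V : Type*} [NormedAddCommGroup V] [InnerProductSpace 𝕜 V]
  (π : G →* (V ≃ₗᵢ[𝕜] V))

theorem inner_map_eq_inner_inv_map (g : G) (x y : V) :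
    ⟪x, π g y⟫_𝕜 = ⟪π g⁻¹ x, y⟫_𝕜 := by
  rw [map_inv, LinearIsometryEquiv.coe_inv, LinearIsometryEquiv.inner_map_eq_flip,
    LinearIsometryEquiv.symm_symm]

theorem inner_inv_map_map_map (a g c : G) (x y : V) :
    ⟪π a⁻¹ x, π g (π c y)⟫_𝕜 = ⟪x, π (a * g * c) y⟫_𝕜 := by
  rw [← inner_map_eq_inner_inv_map, mul_assoc, map_mul, map_mul]
  rfl

def groupFunctionOp [Fintype G] (f : G → 𝕜) : V →ₗ[𝕜] V :=
  ∑ g, f g • ((π g : V ≃ₗᵢ[𝕜] V) : V →ₗ[𝕜] V)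

@[simp]
theorem groupFunctionOp_apply [Fintype G] (f : G → 𝕜) (v : V) :
    groupFunctionOp π f v = ∑ g, f g • π g v := by
  simp [groupFunctionOp]

theorem inner_sum_groupFunctionOp_sum [Fintype G] {κ μ : Type*} [Fintype κ] [Fintype μ]
    (a : κ → G) (c : μ → G) (f : G → 𝕜) (x : V) :
    ⟪∑ k, π (a k)⁻¹ x, groupFunctionOp π f (∑ l, π (c l)⁻¹ x)⟫_𝕜
      = ∑ l, ∑ k, ∑ g, f g * ⟪x, π (a k * g * (c l)⁻¹) x⟫_𝕜 := by
  simp only [groupFunctionOp_apply, map_sum, sum_inner, inner_sum, inner_smul_right,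
    inner_inv_map_map_map, Finset.mul_sum]
  exact Finset.sum_congr rfl fun _ _ => Finset.sum_comm

end UnitaryRepresentation

end

theorem stmt_11_general {G : Type*} [Group G] [Fintype G]
    {V : Type*} [NormedAddCommGroup V] [InnerProductSpace ℂ V]
    (π : G →* (V ≃ₗᵢ[ℂ] V)) (H : Subgroup G) [Fintype H]
    (v₀ : V)
    (ℓ : V → ℂ) (hℓ : ∀ v, ℓ v = ∑ h : H, (inner ℂ v₀ (π h v) : ℂ))
    (φ : G → ℂ) (hφ : ∀ g, φ g = (inner ℂ v₀ (π g v₀) : ℂ))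
    (f : G → ℂ)
    {ι : Type*} [Fintype ι] (b : OrthonormalBasis ι ℂ V) :
    ∑ i : ι, ℓ (∑ g : G, f g • π g (b i)) * (starRingEnd ℂ) (ℓ (b i))
      = ∑ h₁ : H, ∑ h₂ : H, ∑ g : G, f g * φ (h₂ * g * h₁) := by
  set w := ∑ h : H, π (h : G)⁻¹ v₀
  have hℓw : ∀ v, ℓ v = ⟪w, v⟫_ℂ := fun v => by
    simp only [hℓ, w, sum_inner, inner_map_eq_inner_inv_map π]
  calc ∑ i, ℓ (∑ g, f g • π g (b i)) * (starRingEnd ℂ) (ℓ (b i))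
      = ⟪w, groupFunctionOp π f w⟫_ℂ := by
        simpa only [hℓw, groupFunctionOp_apply] using
          b.sum_inner_map_mul_conj_inner (groupFunctionOp π f) w w
    _ = ∑ h₁ : H, ∑ h₂ : H, ∑ g, f g * ⟪v₀, π (h₂ * g * (h₁ : G)⁻¹) v₀⟫_ℂ :=
        inner_sum_groupFunctionOp_sum π Subtype.val Subtype.val f v₀
    _ = ∑ h₁ : H, ∑ h₂ : H, ∑ g, f g * φ (h₂ * g * h₁) := by
        simp only [hφ]
        exact Fintype.sum_equiv (Equiv.inv H) _ _ fun h₁ => rfl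

/-- Finite-group form of the spherical character identity: with
`ℓ(v) = ∑_{h ∈ H} ⟨π(h)v, v₀⟩` and `φ(g) = ⟨π(g)v₀, v₀⟩` (paper convention,
i.e. Mathlib's `inner v₀ _`), for every `f : G → ℂ` and every orthonormal
basis `B`, `∑_{v ∈ B} ℓ(π(f)v) conj(ℓ(v)) = ∑_{h₁,h₂ ∈ H} ∑_{g} f(g) φ(h₂gh₁)`. -/
theorem stmt_11 {G : Type*} [Group G] [Fintype G]
    {V : Type*} [NormedAddCommGroup V] [InnerProductSpace ℂ V]
    [FiniteDimensional ℂ V]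
    (π : G →* (V ≃ₗᵢ[ℂ] V)) (H : Subgroup G) [Fintype H]
    (v₀ : V)
    (ℓ : V → ℂ) (hℓ : ∀ v, ℓ v = ∑ h : H, (inner ℂ v₀ (π h v) : ℂ))
    (φ : G → ℂ) (hφ : ∀ g, φ g = (inner ℂ v₀ (π g v₀) : ℂ))
    (f : G → ℂ)
    {ι : Type*} [Fintype ι] (b : OrthonormalBasis ι ℂ V) :
    ∑ i : ι, ℓ (∑ g : G, f g • π g (b i)) * (starRingEnd ℂ) (ℓ (b i))
      = ∑ h₁ : H, ∑ h₂ : H, ∑ g : G, f g * φ (h₂ * g * h₁) :=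
  stmt_11_general π H v₀ ℓ hℓ φ hφ f b
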